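/- arXiv:2306.17355 — 3 statements merged into one kernel-verified Lean document; each statement's English description precedes it below -/
import Mathlib

section
/- (Theorem 3, Efficient Recurring Auction: first-order conditions.) Suppose v* = (v_1*, …, v_T*) with vhi > v_1* > … > v_T* > vlo is a local maximizer of TS among threshold vectors, and f(v_t*) > 0 and F(v_t*) > 0 for every 1 ≤ t ≤ T. Then, with v_0* = vhi, for every 1 ≤ t < T: ( (F(v_{t−1}*)/F(v_t*))^(N−1) − δ·( N·F(v_t*) − (N−1)·F(v_{t+1}*) )/F(v_t*) )·K − (1 − δ)·(v_t* − v_s) = 0, and for t = T: (F(v_{T−1}*)/F(v_T*))^(N−1)·K − (v_T* − v_s) = 0. -/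
/-!
Only the summands of periods `t` and `t + 1` of `TS` depend on the threshold `v t`. Because the
optimum is strictly decreasing and interior, moving `v t` alone in a small interval stays among
threshold vectors, so the one-variable slice `y ↦ TS (update v t y)` has a local maximum at `v t`
and its derivative vanishes. By the fundamental theorem of calculus that derivative is
`δ^(t-1) N f(v_t)` times the marginal surplus
`F(v_{t-1})^(N-1) K - (v_t - v_s) F(v_t)^(N-1)
  + δ ((v_t - v_s) F(v_t)^(N-1) - d/dv_t [F(v_t)^(N-1) (F(v_t) - F(v_{t+1}))] K)`,
whose `δ` term is absent for `t = T`. Cancelling `δ^(t-1) N f(v_t) ≠ 0` and dividing by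
`F(v_t)^(N-1)` gives the stated conditions.
-/

/-- T-period expected total surplus at thresholds `u : ℕ → ℝ` (with `u 0 = vhi`). -/
noncomputable def TS (N T : ℕ) (K vs δ : ℝ) (F f : ℝ → ℝ) (u : ℕ → ℝ) : ℝ :=
  (∑ t ∈ Finset.Icc 1 T, δ ^ (t - 1) *
    ((∫ x in (u t)..(u (t - 1)), (x - vs) * (N : ℝ) * F x ^ (N - 1) * f x)
      - (N : ℝ) * F (u (t - 1)) ^ (N - 1) * (F (u (t - 1)) - F (u t)) * K)) + vs

open Topology Filter Set Function

section IntervalIntegral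

variable {g : ℝ → ℝ} {s : Set ℝ} {a b : ℝ}

theorem hasDerivAt_integral_right_of_continuousOn (hg : ContinuousOn g s) (hs : s ∈ 𝓝 b)
    (hab : uIcc a b ⊆ s) : HasDerivAt (fun y => ∫ x in a..y, g x) (g b) b :=
  intervalIntegral.integral_hasDerivAt_right (hg.mono hab).intervalIntegrable
    ((hg.mono interior_subset).stronglyMeasurableAtFilter isOpen_interior b
      (mem_interior_iff_mem_nhds.2 hs)) (hg.continuousAt hs)

theorem hasDerivAt_integral_left_of_continuousOn (hg : ContinuousOn g s) (hs : s ∈ 𝓝 b)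
    (hab : uIcc b a ⊆ s) : HasDerivAt (fun y => ∫ x in y..a, g x) (-g b) b :=
  intervalIntegral.integral_hasDerivAt_left (hg.mono hab).intervalIntegrable
    ((hg.mono interior_subset).stronglyMeasurableAtFilter isOpen_interior b
      (mem_interior_iff_mem_nhds.2 hs)) (hg.continuousAt hs)

end IntervalIntegral

theorem IsLocalMaxOn.isLocalMax_update {ι β : Type*} [DecidableEq ι] [Preorder β]
    {Φ : (ι → ℝ) → β} {S : Set (ι → ℝ)} {u : ι → ℝ} {i : ι} (h : IsLocalMaxOn Φ S u)
    (hS : ∀ᶠ y in 𝓝 (u i), update u i y ∈ S) : IsLocalMax (fun y => Φ (update u i y)) (u i) := by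
  rw [← update_eq_self i u] at h
  have hcont :=
    ((continuous_const : Continuous fun _ : ℝ => u).update i continuous_id).tendsto (u i)
  exact h.comp_tendsto (tendsto_nhdsWithin_iff.2 ⟨hcont, hS⟩)

theorem hasDerivAt_sum_Icc_update {G : ℕ → ℝ → ℝ → ℝ} {u : ℕ → ℝ} {T t : ℕ} {d₁ d₂ : ℝ}
    (ht : 1 ≤ t) (htT : t ≤ T) (h₁ : HasDerivAt (G t (u (t - 1))) d₁ (u t))
    (h₂ : t < T → HasDerivAt (fun y => G (t + 1) y (u (t + 1))) d₂ (u t)) :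
    HasDerivAt (fun y => ∑ s ∈ Finset.Icc 1 T, G s (update u t y (s - 1)) (update u t y s))
      (d₁ + if t < T then d₂ else 0) (u t) := by
  have hsum : d₁ + (if t < T then d₂ else 0) =
      ∑ s ∈ Finset.Icc 1 T, ((if s = t then d₁ else 0) + if s = t + 1 then d₂ else 0) := by
    rw [Finset.sum_add_distrib, Finset.sum_ite_eq', Finset.sum_ite_eq']
    simp only [Finset.mem_Icc, ht, htT, and_self, if_true]
    congr 1
    exact if_congr (by omega) rfl rfl
  rw [hsum]
  refine HasDerivAt.fun_sum fun s hs => ?_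
  rw [Finset.mem_Icc] at hs
  rcases eq_or_ne s t with rfl | hst
  · simp only [if_true, update_self, update_of_ne (show s - 1 ≠ s by omega),
      if_neg (show s ≠ s + 1 by omega), add_zero]
    exact h₁
  rcases eq_or_ne s (t + 1) with rfl | hst'
  · simp only [if_neg hst, if_true, zero_add, update_of_ne hst, Nat.add_sub_cancel, update_self]
    exact h₂ (by omega)
  simp only [if_neg hst, if_neg hst', add_zero, update_of_ne hst,
    update_of_ne (show s - 1 ≠ t by omega)]
  exact hasDerivAt_const _ _

def surplusDensity (N : ℕ) (vs : ℝ) (F f : ℝ → ℝ) (x : ℝ) : ℝ :=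
  (x - vs) * (N : ℝ) * F x ^ (N - 1) * f x

noncomputable def periodSurplus (N : ℕ) (K vs : ℝ) (F f : ℝ → ℝ) (a b : ℝ) : ℝ :=
  (∫ x in b..a, surplusDensity N vs F f x) - (N : ℝ) * F a ^ (N - 1) * (F a - F b) * K

theorem TS_eq_sum_periodSurplus (N T : ℕ) (K vs δ : ℝ) (F f : ℝ → ℝ) (u : ℕ → ℝ) :
    TS N T K vs δ F f u =
      (∑ t ∈ Finset.Icc 1 T, δ ^ (t - 1) * periodSurplus N K vs F f (u (t - 1)) (u t)) + vs :=
  rfl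

section periodSurplus

variable {N : ℕ} {K vs : ℝ} {F f : ℝ → ℝ} {s : Set ℝ} {a b : ℝ}

theorem ContinuousOn.surplusDensity (hF : ContinuousOn F s) (hf : ContinuousOn f s) :
    ContinuousOn (surplusDensity N vs F f) s :=
  (((continuousOn_id.sub continuousOn_const).mul continuousOn_const).mul (hF.pow _)).mul hf

theorem hasDerivAt_periodSurplus_lower (hF : HasDerivAt F (f b) b)
    (hg : ContinuousOn (surplusDensity N vs F f) s) (hs : s ∈ 𝓝 b) (hab : uIcc b a ⊆ s) :
    HasDerivAt (periodSurplus N K vs F f a)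
      (N * f b * (F a ^ (N - 1) * K - (b - vs) * F b ^ (N - 1))) b := by
  have h := (hasDerivAt_integral_left_of_continuousOn hg hs hab).sub
    ((((hasDerivAt_const b (F a)).sub hF).const_mul (N * F a ^ (N - 1))).mul_const K)
  exact h.congr_deriv (by simp only [surplusDensity]; ring)

theorem hasDerivAt_periodSurplus_upper (hF : HasDerivAt F (f a) a)
    (hg : ContinuousOn (surplusDensity N vs F f) s) (hs : s ∈ 𝓝 a) (hab : uIcc b a ⊆ s) :
    HasDerivAt (fun y => periodSurplus N K vs F f y b)
      (N * f a * ((a - vs) * F a ^ (N - 1)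
        - (((N - 1 : ℕ) : ℝ) * F a ^ (N - 1 - 1) * (F a - F b) + F a ^ (N - 1)) * K)) a := by
  have h := (hasDerivAt_integral_right_of_continuousOn hg hs hab).sub
    (((((hF.pow (N - 1)).const_mul (N : ℝ)).mul (hF.sub_const (F b)))).mul_const K)
  exact h.congr_deriv (by simp only [surplusDensity, Pi.pow_apply]; ring)

end periodSurplus

theorem hasDerivAt_TS_update {N T t : ℕ} {K vs δ : ℝ} {F f : ℝ → ℝ} {s : Set ℝ} {u : ℕ → ℝ}
    (hF : ∀ x ∈ s, HasDerivAt F (f x) x) (hf : ContinuousOn f s) (ht : 1 ≤ t) (htT : t ≤ T)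
    (hs : s ∈ 𝓝 (u t)) (hprev : uIcc (u t) (u (t - 1)) ⊆ s)
    (hnext : t < T → uIcc (u (t + 1)) (u t) ⊆ s) :
    HasDerivAt (fun y => TS N T K vs δ F f (update u t y))
      (δ ^ (t - 1) * (N * f (u t)) *
        (F (u (t - 1)) ^ (N - 1) * K - (u t - vs) * F (u t) ^ (N - 1)
          + if t < T then δ * ((u t - vs) * F (u t) ^ (N - 1)
              - (((N - 1 : ℕ) : ℝ) * F (u t) ^ (N - 1 - 1) * (F (u t) - F (u (t + 1)))
                + F (u t) ^ (N - 1)) * K)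
            else 0)) (u t) := by
  have hFt : HasDerivAt F (f (u t)) (u t) := hF _ (mem_of_mem_nhds hs)
  have hg : ContinuousOn (surplusDensity N vs F f) s :=
    ContinuousOn.surplusDensity (fun x hx => (hF x hx).continuousAt.continuousWithinAt) hf
  have h := hasDerivAt_sum_Icc_update (G := fun k a b => δ ^ (k - 1) * periodSurplus N K vs F f a b)
    ht htT ((hasDerivAt_periodSurplus_lower hFt hg hs hprev).const_mul _)
    fun htT' => (hasDerivAt_periodSurplus_upper hFt hg hs (hnext htT')).const_mul _
  simp only [TS_eq_sum_periodSurplus]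
  refine (h.add_const vs).congr_deriv ?_
  obtain ⟨k, rfl⟩ : ∃ k, t = k + 1 := ⟨t - 1, by omega⟩
  split_ifs <;> simp only [Nat.add_sub_cancel] <;> ring

def thresholdVectors (vlo vhi : ℝ) (T : ℕ) : Set (ℕ → ℝ) :=
  {u | u 0 = vhi ∧ (∀ t, 1 ≤ t → t ≤ T → u t ≤ u (t - 1)) ∧ vlo ≤ u T}

theorem eventually_update_mem_thresholdVectors {vlo vhi : ℝ} {T t : ℕ} {v : ℕ → ℝ}
    (hv : v ∈ thresholdVectors vlo vhi T) (ht : 1 ≤ t) (hprev : v t < v (t - 1))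
    (hnext : t < T → v (t + 1) < v t) (hlo : vlo < v t) :
    ∀ᶠ y in 𝓝 (v t), update v t y ∈ thresholdVectors vlo vhi T := by
  have hnext' : ∀ᶠ y in 𝓝 (v t), t < T → v (t + 1) < y := by
    by_cases htT : t < T
    · exact (eventually_gt_nhds (hnext htT)).mono fun _ hy _ => hy
    · exact .of_forall fun _ h => absurd h htT
  filter_upwards [eventually_lt_nhds hprev, hnext', eventually_gt_nhds hlo] with y hy₁ hy₂ hy₃
  obtain ⟨hv0, hvstep, hvT⟩ := hv
  refine ⟨by rwa [update_of_ne (by omega)], fun s hs hsT => ?_, ?_⟩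
  · rcases eq_or_ne s t with rfl | hst
    · rw [update_self, update_of_ne (by omega)]
      exact hy₁.le
    rcases eq_or_ne s (t + 1) with rfl | hst'
    · rw [update_of_ne hst, Nat.add_sub_cancel, update_self]
      exact (hy₂ (by omega)).le
    rw [update_of_ne hst, update_of_ne (by omega)]
    exact hvstep s hs hsT
  · rcases eq_or_ne T t with rfl | hTt
    · rw [update_self]
      exact hy₃.le
    · rwa [update_of_ne hTt]

theorem TS_marginal_eq_zero_of_isLocalMaxOn {vlo vhi : ℝ} {N T t : ℕ} {K vs δ : ℝ}
    {F f : ℝ → ℝ} {v : ℕ → ℝ}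
    (hF : ∀ x ∈ Icc vlo vhi, HasDerivAt F (f x) x) (hf : ContinuousOn f (Icc vlo vhi))
    (hN : N ≠ 0) (hδ : δ ≠ 0) (hft : f (v t) ≠ 0)
    (hmax : IsLocalMaxOn (TS N T K vs δ F f) (thresholdVectors vlo vhi T) v)
    (hv : v ∈ thresholdVectors vlo vhi T) (hmem : ∀ s ≤ T, v s ∈ Icc vlo vhi)
    (ht : 1 ≤ t) (htT : t ≤ T) (hprev : v t < v (t - 1)) (hnext : t < T → v (t + 1) < v t)
    (hlo : vlo < v t) :
    F (v (t - 1)) ^ (N - 1) * K - (v t - vs) * F (v t) ^ (N - 1)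
      + (if t < T then δ * ((v t - vs) * F (v t) ^ (N - 1)
          - (((N - 1 : ℕ) : ℝ) * F (v t) ^ (N - 1 - 1) * (F (v t) - F (v (t + 1)))
            + F (v t) ^ (N - 1)) * K)
        else 0) = 0 := by
  have hnhds : Icc vlo vhi ∈ 𝓝 (v t) :=
    Icc_mem_nhds hlo (hprev.trans_le (hmem (t - 1) (by omega)).2)
  have hderiv := hasDerivAt_TS_update (N := N) (K := K) (vs := vs) (δ := δ) hF hf ht htT hnhds
    (uIcc_subset_Icc (hmem t htT) (hmem (t - 1) (by omega)))
    fun htT' => uIcc_subset_Icc (hmem (t + 1) htT') (hmem t htT)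
  have hzero := (hmax.isLocalMax_update
    (eventually_update_mem_thresholdVectors hv ht hprev hnext hlo)).hasDerivAt_eq_zero hderiv
  exact (mul_eq_zero.1 hzero).resolve_left (by simp [hN, hδ, hft])

theorem foc_interior_of_marginal_eq_zero {N : ℕ} (hN : 2 ≤ N) {K δ w p x q : ℝ} (hx : x ≠ 0)
    (h : p ^ (N - 1) * K - w * x ^ (N - 1) + δ * (w * x ^ (N - 1)
      - (((N - 1 : ℕ) : ℝ) * x ^ (N - 1 - 1) * (x - q) + x ^ (N - 1)) * K) = 0) :
    ((p / x) ^ (N - 1) - δ * (N * x - (N - 1) * q) / x) * K - (1 - δ) * w = 0 := by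
  obtain ⟨m, rfl⟩ : ∃ m, N = m + 2 := ⟨N - 2, by omega⟩
  simp only [show m + 2 - 1 = m + 1 from rfl, Nat.add_sub_cancel] at h ⊢
  push_cast at h ⊢
  rw [← zero_div (x ^ (m + 1)), ← h, div_pow]
  field_simp
  ring

theorem foc_terminal_of_marginal_eq_zero {N : ℕ} {K w p x : ℝ} (hx : x ≠ 0)
    (h : p ^ (N - 1) * K - w * x ^ (N - 1) = 0) : (p / x) ^ (N - 1) * K - w = 0 := by
  rw [← zero_div (x ^ (N - 1)), ← h, div_pow]
  field_simp

theorem efficient_recurring_auction_FOC_general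
    (vlo vhi : ℝ)
    (N T : ℕ) (hN : 2 ≤ N) (hT : 1 ≤ T)
    (K : ℝ)
    (vs : ℝ)
    (δ : ℝ) (hδ0 : 0 < δ)
    (F f : ℝ → ℝ)
    (hFderiv : ∀ x ∈ Set.Icc vlo vhi, HasDerivAt F (f x) x)
    (hfcont : ContinuousOn f (Set.Icc vlo vhi))
    (v : ℕ → ℝ)
    (hv0 : v 0 = vhi)
    (hv1 : v 1 < vhi)
    (hvdec : ∀ t, 1 ≤ t → t < T → v (t + 1) < v t)
    (hvT : vlo < v T)
    (hfpos : ∀ t, 1 ≤ t → t ≤ T → 0 < f (v t))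
    (hFpos : ∀ t, 1 ≤ t → t ≤ T → 0 < F (v t))
    (hmax : IsLocalMaxOn (TS N T K vs δ F f)
      {u : ℕ → ℝ | u 0 = vhi ∧ (∀ t, 1 ≤ t → t ≤ T → u t ≤ u (t - 1)) ∧ vlo ≤ u T} v) :
    (∀ t, 1 ≤ t → t < T →
      ((F (v (t - 1)) / F (v t)) ^ (N - 1)
          - δ * ((N : ℝ) * F (v t) - ((N : ℝ) - 1) * F (v (t + 1))) / F (v t)) * K
        - (1 - δ) * (v t - vs) = 0) ∧
    (F (v (T - 1)) / F (v T)) ^ (N - 1) * K - (v T - vs) = 0 := by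
  have hstep : ∀ t, t < T → v (t + 1) < v t := fun t ht => by
    rcases Nat.eq_zero_or_pos t with rfl | ht0
    · rwa [hv0]
    · exact hvdec t ht0 ht
  have hanti : AntitoneOn v (Iic T) := (strictAntiOn_Iic_of_succ_lt hstep).antitoneOn
  have hprev : ∀ t, 1 ≤ t → t ≤ T → v t < v (t - 1) := fun t ht htT => by
    simpa [Nat.sub_add_cancel ht] using hstep (t - 1) (by omega)
  have hlo : ∀ t ≤ T, vlo < v t := fun t htT => hvT.trans_le (hanti htT self_mem_Iic htT)
  have hmem : ∀ t ≤ T, v t ∈ Icc vlo vhi := fun t htT =>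
    ⟨(hlo t htT).le, hv0 ▸ hanti (Nat.zero_le T) htT (Nat.zero_le t)⟩
  have hv : v ∈ thresholdVectors vlo vhi T := ⟨hv0, fun t ht htT => (hprev t ht htT).le, hvT.le⟩
  have hmarginal := fun t (ht : 1 ≤ t) (htT : t ≤ T) =>
    TS_marginal_eq_zero_of_isLocalMaxOn (K := K) (vs := vs) hFderiv hfcont (by omega) hδ0.ne'
      (hfpos t ht htT).ne' hmax hv hmem ht htT (hprev t ht htT) (hstep t) (hlo t htT)
  refine ⟨fun t ht htT => ?_, ?_⟩
  · have h := hmarginal t ht htT.le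
    rw [if_pos htT] at h
    exact foc_interior_of_marginal_eq_zero hN (hFpos t ht htT.le).ne' h
  · have h := hmarginal T hT le_rfl
    rw [if_neg (lt_irrefl T), add_zero] at h
    exact foc_terminal_of_marginal_eq_zero (hFpos T hT le_rfl).ne' h

/-- Theorem 3 (Efficient Recurring Auction, first-order conditions): if a strictly interior
decreasing threshold vector `v*` is a local maximizer of `TS` among threshold vectors, and
`f(v_t*) > 0`, `F(v_t*) > 0` for all `1 ≤ t ≤ T`, then for `1 ≤ t < T`:
`( (F(v_{t−1}*)/F(v_t*))^(N−1) − δ·(N·F(v_t*) − (N−1)·F(v_{t+1}*))/F(v_t*) )·K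
  − (1−δ)·(v_t* − v_s) = 0`, and `(F(v_{T−1}*)/F(v_T*))^(N−1)·K − (v_T* − v_s) = 0`. -/
theorem efficient_recurring_auction_FOC
    (vlo vhi : ℝ) (hlohi : vlo < vhi)
    (N T : ℕ) (hN : 2 ≤ N) (hT : 1 ≤ T)
    (K : ℝ) (hK : 0 < K)
    (vs : ℝ)
    (δ : ℝ) (hδ0 : 0 < δ) (hδ1 : δ < 1)
    (F f : ℝ → ℝ)
    (hFderiv : ∀ x ∈ Set.Icc vlo vhi, HasDerivAt F (f x) x)
    (hfcont : ContinuousOn f (Set.Icc vlo vhi))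
    (hFmono : MonotoneOn F (Set.Icc vlo vhi))
    (v : ℕ → ℝ)
    (hv0 : v 0 = vhi)
    (hv1 : v 1 < vhi)
    (hvdec : ∀ t, 1 ≤ t → t < T → v (t + 1) < v t)
    (hvT : vlo < v T)
    (hfpos : ∀ t, 1 ≤ t → t ≤ T → 0 < f (v t))
    (hFpos : ∀ t, 1 ≤ t → t ≤ T → 0 < F (v t))
    (hmax : IsLocalMaxOn (TS N T K vs δ F f)
      {u : ℕ → ℝ | u 0 = vhi ∧ (∀ t, 1 ≤ t → t ≤ T → u t ≤ u (t - 1)) ∧ vlo ≤ u T} v) :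
    (∀ t, 1 ≤ t → t < T →
      ((F (v (t - 1)) / F (v t)) ^ (N - 1)
          - δ * ((N : ℝ) * F (v t) - ((N : ℝ) - 1) * F (v (t + 1))) / F (v t)) * K
        - (1 - δ) * (v t - vs) = 0) ∧
    (F (v (T - 1)) / F (v T)) ^ (N - 1) * K - (v T - vs) = 0 :=
  efficient_recurring_auction_FOC_general vlo vhi N T hN hT K vs δ hδ0 F f hFderiv hfcont v hv0 hv1
    hvdec hvT hfpos hFpos hmax
end

section
/- (Revenue identity, equation (8) of the paper.) Suppose G(v_t) > 0 for every 1 ≤ t ≤ T, and define, for each 1 ≤ t ≤ T, r_t = (1/G(v_t)) · ( Σ_{τ=t}^{T} (1−δ)·δ^(τ−t)·G(v_τ)·v_τ − K·G(v_{t−1}) + Σ_{τ=t}^{T−1} δ^(τ−t+1) · ∫_{v_{τ+1}}^{v_τ} x·(N−1)·F(x)^(N−2)·f(x) dx + δ^(T−t+1)·G(v_T)·v_T ). Then the seller's expected profit expressed via reserve prices equals R(v): Σ_{t=1}^T δ^(t−1)·( N·(N−1)·∫_{v_t}^{v_{t−1}} (x − v_s)·f(x)·(F(v_{t−1}) − F(x))·F(x)^(N−2)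 dx + N·(F(v_{t−1}) − F(v_t))·G(v_t)·(r_t − v_s) ) = R(v). -/
/-! Within one period the profit integrand splits pointwise: its `x`-part is the revenue
integrand of `R(v)` plus `F(v_{t-1}) - 1` times `x G'(x)`, and its `v_s`-part is the derivative
of `N F(v_{t-1}) G - (N - 1) F^N`. With `P_t = ∫_{v_t}^{v_{t-1}} x dG(x)` and
`S_t = G(v_t) r_t + K G(v_{t-1})`, the formula for `r_t` says `S_T = G(v_T) v_T` and
`S_t = (1 - δ) G(v_t) v_t + δ (P_{t+1} + S_{t+1})`, so the remaining boundary terms telescope,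
leaving the final-period term of `R(v)` and a term with the factor `F(v_0) - 1 = 0`. -/

/-- T-period expected seller revenue at thresholds `u : ℕ → ℝ` (with `u 0 = vhi`),
expressed purely in terms of the entry thresholds (equation (8) of the paper). -/
noncomputable def Rev (N T : ℕ) (K vs δ : ℝ) (F f : ℝ → ℝ) (u : ℕ → ℝ) : ℝ :=
  δ ^ T * (N : ℝ) * (1 - F (u T)) * F (u T) ^ (N - 1) * u T
    + ∑ t ∈ Finset.Icc 1 T, δ ^ (t - 1) *
        ((N : ℝ) * (∫ x in (u t)..(u (t - 1)),
            x * (1 - F x) * ((N : ℝ) - 1) * F x ^ (N - 2) * f x)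
          + (N : ℝ) * (1 - δ) * (1 - F (u t)) * F (u t) ^ (N - 1) * u t
          - (N : ℝ) * F (u (t - 1)) ^ (N - 1) * (F (u (t - 1)) - F (u t)) * K
          - vs * (F (u (t - 1)) ^ N - F (u t) ^ N))

open MeasureTheory Finset

theorem le_of_forall_succ_le_of_le {α : Type*} [Preorder α] {v : ℕ → α} {T : ℕ}
    (hv : ∀ t, 1 ≤ t → t ≤ T → v t ≤ v (t - 1)) {i j : ℕ} (hij : i ≤ j) (hjT : j ≤ T) :
    v j ≤ v i := by
  induction j, hij using Nat.le_induction with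
  | base => exact le_rfl
  | succ j hij ih => exact (hv (j + 1) (by omega) hjT).trans (ih (by omega))

theorem sum_Icc_pow_sub_mul_eq_add (δ : ℝ) (h : ℕ → ℝ) {t M : ℕ} (htM : t ≤ M) :
    ∑ τ ∈ Icc t M, δ ^ (τ - t) * h τ
      = h t + δ * ∑ τ ∈ Icc (t + 1) M, δ ^ (τ - (t + 1)) * h τ := by
  rw [Icc_eq_cons_Ioc htM, sum_cons, ← Icc_add_one_left_eq_Ioc, mul_sum, Nat.sub_self,
    pow_zero, one_mul]
  congr 1
  refine sum_congr rfl fun τ hτ => ?_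
  rw [show τ - t = τ - (t + 1) + 1 by grind, pow_succ]
  ring

theorem sum_Icc_discount_telescope {δ : ℝ} {T : ℕ} (hT : 1 ≤ T) {b P S g : ℕ → ℝ}
    (hST : S T = g T)
    (hS : ∀ t, 1 ≤ t → t < T → S t = (1 - δ) * g t + δ * (P (t + 1) + S (t + 1))) :
    ∑ t ∈ Icc 1 T, δ ^ (t - 1) * ((b (t - 1) - 1) * P t + (b (t - 1) - b t) * S t
        - (1 - δ) * (1 - b t) * g t)
      = δ ^ T * (1 - b T) * g T + (b 0 - 1) * (P 1 + S 1) := by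
  set c : ℕ → ℝ := fun t => δ ^ (t - 1) * (1 - b (t - 1)) * (P t + S t)
  have hstep : ∀ t ∈ Ico 1 T, δ ^ (t - 1) * ((b (t - 1) - 1) * P t + (b (t - 1) - b t) * S t
      - (1 - δ) * (1 - b t) * g t) = c (t + 1) - c t := by
    intro t ht
    obtain ⟨s, rfl⟩ : ∃ s, t = s + 1 := ⟨t - 1, by grind⟩
    simp only [c, Nat.add_sub_cancel, pow_succ]
    rw [hS (s + 1) (by omega) (by grind)]
    ring
  rw [← Ico_add_one_right_eq_Icc, sum_Ico_succ_top hT, sum_congr rfl hstep, sum_Ico_sub c hT]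
  obtain ⟨n, rfl⟩ : ∃ n, T = n + 1 := ⟨T - 1, by omega⟩
  simp only [c, Nat.add_sub_cancel, Nat.sub_self, pow_zero, pow_succ]
  rw [hST]
  ring

/-- `G(v_t) r_t + K G(v_{t-1})` in terms of `g τ = G(v_τ) v_τ` and `p τ = P_τ`. -/
noncomputable def entryValue (δ : ℝ) (T : ℕ) (g p : ℕ → ℝ) (t : ℕ) : ℝ :=
  ∑ τ ∈ Icc t T, δ ^ (τ - t) * ((1 - δ) * g τ)
    + δ * ∑ τ ∈ Icc t (T - 1), δ ^ (τ - t) * p (τ + 1) + δ ^ (T - t + 1) * g T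

theorem entryValue_self {δ : ℝ} {T : ℕ} (hT : 1 ≤ T) (g p : ℕ → ℝ) :
    entryValue δ T g p T = g T := by
  rw [entryValue, Icc_self, Icc_eq_empty (by omega)]
  simp only [sum_singleton, sum_empty, Nat.sub_self]
  ring

theorem entryValue_of_lt {δ : ℝ} {T t : ℕ} (g p : ℕ → ℝ) (htT : t < T) :
    entryValue δ T g p t = (1 - δ) * g t + δ * (p (t + 1) + entryValue δ T g p (t + 1)) := by
  rw [entryValue, entryValue, sum_Icc_pow_sub_mul_eq_add δ _ htT.le,
    sum_Icc_pow_sub_mul_eq_add δ _ (Nat.le_sub_one_of_lt htT),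
    show T - t + 1 = T - (t + 1) + 1 + 1 by omega, pow_succ]
  ring

section ProfitIntegral

variable {F f : ℝ → ℝ} {a b : ℝ}

noncomputable def integralXdG (N : ℕ) (F f : ℝ → ℝ) (a b : ℝ) : ℝ :=
  ∫ x in a..b, x * ((N : ℝ) - 1) * F x ^ (N - 2) * f x

theorem integral_profit_eq {N : ℕ} (hN : 2 ≤ N) (hF : ∀ x ∈ Set.uIcc a b, HasDerivAt F (f x) x)
    (hf : ContinuousOn f (Set.uIcc a b)) (vs A : ℝ) :
    (N : ℝ) * ((N : ℝ) - 1) * ∫ x in a..b, (x - vs) * f x * (A - F x) * F x ^ (N - 2)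
      = (N : ℝ) * (A - 1) * integralXdG N F f a b
        + (N : ℝ) * (∫ x in a..b, x * (1 - F x) * ((N : ℝ) - 1) * F x ^ (N - 2) * f x)
        - vs * ((N : ℝ) * A * (F b ^ (N - 1) - F a ^ (N - 1))
          - ((N : ℝ) - 1) * (F b ^ N - F a ^ N)) := by
  obtain ⟨n, rfl⟩ : ∃ n, N = n + 2 := ⟨N - 2, by omega⟩
  simp only [Nat.add_sub_cancel, show n + 2 - 1 = n + 1 by omega, integralXdG]
  push_cast
  simp only [show (n : ℝ) + 2 - 1 = n + 1 by ring]
  have hFc : ContinuousOn F (Set.uIcc a b) := HasDerivAt.continuousOn hF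
  set Φ : ℝ → ℝ := fun x => (n + 2) * A * F x ^ (n + 1) - (n + 1) * F x ^ (n + 2)
  have hΦ : ∀ x ∈ Set.uIcc a b,
      HasDerivAt Φ ((n + 2) * (n + 1) * (F x ^ n * f x * (A - F x))) x := by
    intro x hx
    refine ((((hF x hx).pow (n + 1)).const_mul _).sub
      (((hF x hx).pow (n + 2)).const_mul _)).congr_deriv ?_
    push_cast
    ring
  have hΦ' : ∫ x in a..b, (n + 2) * (n + 1) * (F x ^ n * f x * (A - F x)) = Φ b - Φ a :=
    intervalIntegral.integral_eq_sub_of_hasDerivAt hΦ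
      (ContinuousOn.intervalIntegrable (by fun_prop))
  have hp : IntervalIntegrable (fun x => x * (n + 1) * F x ^ n * f x) volume a b :=
    ContinuousOn.intervalIntegrable (by fun_prop)
  have hq : IntervalIntegrable (fun x => x * (1 - F x) * (n + 1) * F x ^ n * f x) volume a b :=
    ContinuousOn.intervalIntegrable (by fun_prop)
  have hφ : IntervalIntegrable (fun x => (n + 2) * (n + 1) * (F x ^ n * f x * (A - F x)))
      volume a b :=
    ContinuousOn.intervalIntegrable (by fun_prop)
  calc ((n : ℝ) + 2) * (n + 1) * ∫ x in a..b, (x - vs) * f x * (A - F x) * F x ^ n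
      = ∫ x in a..b, ((n + 2) * (A - 1) * (x * (n + 1) * F x ^ n * f x)
          + (n + 2) * (x * (1 - F x) * (n + 1) * F x ^ n * f x)
          - vs * ((n + 2) * (n + 1) * (F x ^ n * f x * (A - F x)))) := by
        rw [← intervalIntegral.integral_const_mul]
        exact intervalIntegral.integral_congr fun x _ => by ring
    _ = _ := by
        rw [intervalIntegral.integral_sub ((hp.const_mul _).add (hq.const_mul _))
            (hφ.const_mul _), intervalIntegral.integral_add (hp.const_mul _) (hq.const_mul _)]
        simp only [intervalIntegral.integral_const_mul, hΦ', Φ]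
        ring

theorem period_profit_eq {N : ℕ} (hN : 2 ≤ N) (hF : ∀ x ∈ Set.uIcc a b, HasDerivAt F (f x) x)
    (hf : ContinuousOn f (Set.uIcc a b)) {vs K r S : ℝ}
    (hr : F a ^ (N - 1) * r = S - K * F b ^ (N - 1)) :
    (N : ℝ) * ((N : ℝ) - 1) * (∫ x in a..b, (x - vs) * f x * (F b - F x) * F x ^ (N - 2))
        + (N : ℝ) * (F b - F a) * F a ^ (N - 1) * (r - vs)
      = (N : ℝ) * (∫ x in a..b, x * (1 - F x) * ((N : ℝ) - 1) * F x ^ (N - 2) * f x)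
        - (N : ℝ) * F b ^ (N - 1) * (F b - F a) * K - vs * (F b ^ N - F a ^ N)
        + (N : ℝ) * ((F b - 1) * integralXdG N F f a b + (F b - F a) * S) := by
  have hpow : ∀ y : ℝ, y ^ N = y ^ (N - 1) * y := fun y => by
    rw [← pow_succ, Nat.sub_add_cancel (by omega)]
  rw [integral_profit_eq hN hF hf, hpow (F a), hpow (F b)]
  linear_combination (N : ℝ) * (F b - F a) * hr

end ProfitIntegral

theorem revenue_identity_general
    (vlo vhi : ℝ)
    (N T : ℕ) (hN : 2 ≤ N) (hT : 1 ≤ T)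
    (K : ℝ)
    (vs : ℝ)
    (δ : ℝ)
    (F f : ℝ → ℝ)
    (hFderiv : ∀ x ∈ Set.Icc vlo vhi, HasDerivAt F (f x) x)
    (hfcont : ContinuousOn f (Set.Icc vlo vhi))
    (hFhi : F vhi = 1)
    (v : ℕ → ℝ)
    (hv0 : v 0 = vhi)
    (hvmono : ∀ t, 1 ≤ t → t ≤ T → v t ≤ v (t - 1))
    (hvT : vlo ≤ v T)
    (hGpos : ∀ t, 1 ≤ t → t ≤ T → 0 < F (v t) ^ (N - 1))
    (r : ℕ → ℝ)
    (hr : ∀ t, 1 ≤ t → t ≤ T →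
      r t = (1 / F (v t) ^ (N - 1)) *
        ((∑ τ ∈ Finset.Icc t T, (1 - δ) * δ ^ (τ - t) * F (v τ) ^ (N - 1) * v τ)
          - K * F (v (t - 1)) ^ (N - 1)
          + (∑ τ ∈ Finset.Icc t (T - 1), δ ^ (τ - t + 1) *
              ∫ x in (v (τ + 1))..(v τ), x * ((N : ℝ) - 1) * F x ^ (N - 2) * f x)
          + δ ^ (T - t + 1) * F (v T) ^ (N - 1) * v T)) :
    ∑ t ∈ Finset.Icc 1 T, δ ^ (t - 1) *
        ((N : ℝ) * ((N : ℝ) - 1) * (∫ x in (v t)..(v (t - 1)),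
            (x - vs) * f x * (F (v (t - 1)) - F x) * F x ^ (N - 2))
          + (N : ℝ) * (F (v (t - 1)) - F (v t)) * F (v t) ^ (N - 1) * (r t - vs))
      = Rev N T K vs δ F f v := by
  have hv : ∀ t ≤ T, v t ∈ Set.Icc vlo vhi := fun t ht =>
    ⟨hvT.trans (le_of_forall_succ_le_of_le hvmono ht le_rfl),
      hv0 ▸ le_of_forall_succ_le_of_le hvmono (Nat.zero_le t) ht⟩
  set P : ℕ → ℝ := fun t => integralXdG N F f (v t) (v (t - 1))
  set S := entryValue δ T (fun t => F (v t) ^ (N - 1) * v t) P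
  have hGr : ∀ t, 1 ≤ t → t ≤ T →
      F (v t) ^ (N - 1) * r t = S t - K * F (v (t - 1)) ^ (N - 1) := by
    intro t ht1 htT
    rw [hr t ht1 htT, ← mul_assoc, mul_one_div_cancel (hGpos t ht1 htT).ne', one_mul]
    simp only [S, P, entryValue, integralXdG, Nat.add_sub_cancel, mul_sum, pow_succ, mul_assoc,
      mul_comm, mul_left_comm]
    ring
  rw [Rev, ← sub_eq_iff_eq_add, ← sum_sub_distrib]
  calc _ = N * ∑ t ∈ Icc 1 T, δ ^ (t - 1) * ((F (v (t - 1)) - 1) * P t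
          + (F (v (t - 1)) - F (v t)) * S t
          - (1 - δ) * (1 - F (v t)) * (F (v t) ^ (N - 1) * v t)) := by
        rw [mul_sum]
        refine sum_congr rfl fun t ht => ?_
        obtain ⟨ht1, htT⟩ := mem_Icc.mp ht
        have hsub : Set.uIcc (v t) (v (t - 1)) ⊆ Set.Icc vlo vhi :=
          Set.uIcc_subset_Icc (hv t htT) (hv (t - 1) (by omega))
        rw [period_profit_eq hN (fun x hx => hFderiv x (hsub hx)) (hfcont.mono hsub)
          (hGr t ht1 htT)]
        ring
    _ = _ := by
        rw [sum_Icc_discount_telescope (b := fun t => F (v t)) hT (entryValue_self hT _ _)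
          (fun t _ ht => entryValue_of_lt _ _ ht), hv0, hFhi]
        ring

/-- Revenue identity: with reserve prices `r_t` obtained from the entry-threshold inversion
formula, the seller's expected profit expressed via reserve prices,
`Σ_{t=1}^T δ^(t−1)·( N·(N−1)·∫_{v_t}^{v_{t−1}} (x − v_s)·f(x)·(F(v_{t−1}) − F(x))·F(x)^(N−2) dx
+ N·(F(v_{t−1}) − F(v_t))·G(v_t)·(r_t − v_s) )`, equals `R(v)`. -/
theorem revenue_identity
    (vlo vhi : ℝ) (hlohi : vlo < vhi)
    (N T : ℕ) (hN : 2 ≤ N) (hT : 1 ≤ T)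
    (K : ℝ) (hK : 0 < K)
    (vs : ℝ)
    (δ : ℝ) (hδ0 : 0 < δ) (hδ1 : δ < 1)
    (F f : ℝ → ℝ)
    (hFderiv : ∀ x ∈ Set.Icc vlo vhi, HasDerivAt F (f x) x)
    (hfcont : ContinuousOn f (Set.Icc vlo vhi))
    (hFmono : MonotoneOn F (Set.Icc vlo vhi))
    (hFhi : F vhi = 1)
    (v : ℕ → ℝ)
    (hv0 : v 0 = vhi)
    (hvmono : ∀ t, 1 ≤ t → t ≤ T → v t ≤ v (t - 1))
    (hvT : vlo ≤ v T)
    (hGpos : ∀ t, 1 ≤ t → t ≤ T → 0 < F (v t) ^ (N - 1))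
    (r : ℕ → ℝ)
    (hr : ∀ t, 1 ≤ t → t ≤ T →
      r t = (1 / F (v t) ^ (N - 1)) *
        ((∑ τ ∈ Finset.Icc t T, (1 - δ) * δ ^ (τ - t) * F (v τ) ^ (N - 1) * v τ)
          - K * F (v (t - 1)) ^ (N - 1)
          + (∑ τ ∈ Finset.Icc t (T - 1), δ ^ (τ - t + 1) *
              ∫ x in (v (τ + 1))..(v τ), x * ((N : ℝ) - 1) * F x ^ (N - 2) * f x)
          + δ ^ (T - t + 1) * F (v T) ^ (N - 1) * v T)) :
    ∑ t ∈ Finset.Icc 1 T, δ ^ (t - 1) *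
        ((N : ℝ) * ((N : ℝ) - 1) * (∫ x in (v t)..(v (t - 1)),
            (x - vs) * f x * (F (v (t - 1)) - F x) * F x ^ (N - 2))
          + (N : ℝ) * (F (v (t - 1)) - F (v t)) * F (v t) ^ (N - 1) * (r t - vs))
      = Rev N T K vs δ F f v :=
  revenue_identity_general vlo vhi N T hN hT K vs δ F f hFderiv hfcont hFhi v hv0 hvmono hvT hGpos r
    hr
end

section
/- (Monotone comparison corollary used in the equilibrium verification.) Let 1 ≤ t < t' ≤ T + 1, where either t' ≤ T and F(v_{t'}) > 0, or t = T, t' = T + 1 and F(v_T) > 0. Then: (i) if Π_t(v_t) ≥ Π_{t'}(v_t), then Π_t(v) > Π_{t'}(v) for every v ∈ (v_t, vhi]; and (ii) if Π_t(v_t) ≤ Π_{t'}(v_t), then Π_t(v) < Π_{t'}(v) for every v ∈ [vlo, v_t). -/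
/-- Interim payoff from entering the period-`t` auction, extended with `Π_{T+1} ≡ 0`. -/
noncomputable def PiPayoffExt (δ : ℝ) (N : ℕ) (K : ℝ) (T : ℕ) (r : ℕ → ℝ) (F f : ℝ → ℝ)
    (vt : ℕ → ℝ) (t : ℕ) (v : ℝ) : ℝ :=
  if t ≤ T then
    δ ^ (t - 1) *
      ((∫ x in (vt t)..(min (max v (vt t)) (vt (t - 1))),
          (v - x) * ((N : ℝ) - 1) * F x ^ (N - 2) * f x)
        + (v - r t) * F (vt t) ^ (N - 1) - F (vt (t - 1)) ^ (N - 1) * K)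
  else 0

/-!
Since `G = F ^ (N - 1)` has derivative `g ≥ 0`, the payoff can be written as
`Π_t(v) = δ^(t-1) (∫_{v_t}^{v_{t-1}} (v - x)⁺ g(x) dx + (v - r_t) G(v_t) - G(v_{t-1}) K)`,
so `Π_t` grows in `v` with slopes between `δ^(t-1) G(v_t)` and `δ^(t-1) G(v_{t-1})`.
For `t < t'` the slope of `Π_{t'}` is at most `δ^(t'-1) G(v_{t'-1}) ≤ δ^(t'-1) G(v_t)`, which is
strictly below the least slope `δ^(t-1) G(v_t)` of `Π_t` because `G(v_t) > 0` and `δ < 1`.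
Hence `Π_t - Π_{t'}` is strictly increasing, and both claims compare it with its value at `v_t`.
-/

open Set MeasureTheory intervalIntegral

theorem AntitoneOn.Iic_of_le_pred {α : Type*} [Preorder α] {u : ℕ → α} {T : ℕ}
    (hu : ∀ t, 1 ≤ t → t ≤ T → u t ≤ u (t - 1)) : AntitoneOn u (Iic T) := by
  intro i _ j hj hij
  induction j, hij using Nat.le_induction with
  | base => exact le_rfl
  | succ n _ ih =>
    have hn : n + 1 ≤ T := hj
    have hstep : u (n + 1) ≤ u n := by simpa using hu (n + 1) (by omega) hn
    exact hstep.trans (ih (mem_Iic.2 (by omega)))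

theorem HasDerivAt.nonneg_of_monotoneOn_Icc {F : ℝ → ℝ} {f' a b x : ℝ} (hab : a < b)
    (hx : x ∈ Icc a b) (hF : HasDerivAt F f' x) (hmono : MonotoneOn F (Icc a b)) : 0 ≤ f' :=
  hF.hasDerivWithinAt.nonneg_of_monotoneOn
    (uniqueDiffWithinAt_iff_accPt.1 (uniqueDiffOn_Icc hab x hx)) hmono

theorem HasDerivAt.pow_sub_one {F : ℝ → ℝ} {f' x : ℝ} {N : ℕ} (hN : 1 ≤ N)
    (hF : HasDerivAt F f' x) :
    HasDerivAt (fun y => F y ^ (N - 1)) (((N : ℝ) - 1) * F x ^ (N - 2) * f') x := by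
  have h := hF.pow (N - 1)
  rwa [Nat.cast_sub hN, Nat.cast_one, Nat.sub_sub] at h

theorem integral_sub_mul_eq_integral_max_sub_mul {g : ℝ → ℝ} {a b : ℝ} (hab : a ≤ b)
    (hg : IntervalIntegrable g volume a b) (v : ℝ) :
    ∫ x in a..min (max v a) b, (v - x) * g x = ∫ x in a..b, max (v - x) 0 * g x := by
  set m := min (max v a) b
  have ham : a ≤ m := le_min (le_max_right _ _) hab
  have hmb : m ≤ b := min_le_right _ _
  have hint : IntervalIntegrable (fun x => max (v - x) 0 * g x) volume a b :=
    hg.continuousOn_mul (by fun_prop)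
  have hleft : ∫ x in a..m, (v - x) * g x = ∫ x in a..m, max (v - x) 0 * g x := by
    refine integral_congr_ae (Filter.Eventually.of_forall fun x hx => ?_)
    rw [uIoc_of_le ham] at hx
    have hxv : x ≤ v := (le_max_iff.1 (hx.2.trans (min_le_left _ _))).resolve_right hx.1.not_ge
    rw [max_eq_left (sub_nonneg.2 hxv)]
  have hright : ∫ x in m..b, max (v - x) 0 * g x = 0 := by
    refine (integral_congr_ae (g := fun _ => 0) (Filter.Eventually.of_forall fun x hx => ?_)).trans
      integral_zero
    rw [uIoc_of_le hmb] at hx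
    have hvx : v < x := (max_lt_iff.1 ((min_lt_iff.1 hx.1).resolve_right hx.2.not_gt)).1
    rw [max_eq_right (by linarith), zero_mul]
  rw [hleft, ← integral_add_adjacent_intervals
    (hint.mono_set (uIcc_subset_uIcc left_mem_uIcc (mem_uIcc_of_le ham hmb)))
    (hint.mono_set (uIcc_subset_uIcc (mem_uIcc_of_le ham hmb) right_mem_uIcc)), hright, add_zero]

section MaxSubMul

variable {g : ℝ → ℝ} {a b v₁ v₂ : ℝ}

theorem integral_max_sub_mul_mono (hab : a ≤ b) (hg : IntervalIntegrable g volume a b)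
    (hg0 : ∀ x ∈ Icc a b, 0 ≤ g x) (hv : v₁ ≤ v₂) :
    ∫ x in a..b, max (v₁ - x) 0 * g x ≤ ∫ x in a..b, max (v₂ - x) 0 * g x :=
  integral_mono_on hab (hg.continuousOn_mul (by fun_prop)) (hg.continuousOn_mul (by fun_prop))
    fun x hx => mul_le_mul_of_nonneg_right (max_le_max (by linarith) le_rfl) (hg0 x hx)

theorem integral_max_sub_mul_le (hab : a ≤ b) (hg : IntervalIntegrable g volume a b)
    (hg0 : ∀ x ∈ Icc a b, 0 ≤ g x) (hv : v₁ ≤ v₂) :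
    ∫ x in a..b, max (v₂ - x) 0 * g x
      ≤ (∫ x in a..b, max (v₁ - x) 0 * g x) + (v₂ - v₁) * ∫ x in a..b, g x := by
  have hint₁ : IntervalIntegrable (fun x => max (v₁ - x) 0 * g x) volume a b :=
    hg.continuousOn_mul (by fun_prop)
  rw [← intervalIntegral.integral_const_mul,
    ← intervalIntegral.integral_add hint₁ (hg.const_mul _)]
  refine integral_mono_on hab (hg.continuousOn_mul (by fun_prop)) (hint₁.add (hg.const_mul _))
    fun x hx => ?_
  have hmax : max (v₂ - x) 0 ≤ max (v₁ - x) 0 + (v₂ - v₁) :=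
    max_le (by linarith [le_max_left (v₁ - x) 0]) (by linarith [le_max_right (v₁ - x) 0])
  nlinarith [hg0 x hx]

end MaxSubMul

theorem intervalIntegrable_const_mul_pow_mul {F f : ℝ → ℝ} {a b : ℝ} (hab : a ≤ b)
    (hF : ∀ x ∈ Icc a b, HasDerivAt F (f x) x) (hf : ContinuousOn f (Icc a b)) (c : ℝ) (n : ℕ) :
    IntervalIntegrable (fun x => c * F x ^ n * f x) volume a b := by
  refine ContinuousOn.intervalIntegrable ?_
  rw [uIcc_of_le hab]
  exact (continuousOn_const.mul ((HasDerivAt.continuousOn hF).pow n)).mul hf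

section Payoff

variable {δ K : ℝ} {N T t : ℕ} {r vt : ℕ → ℝ} {F f : ℝ → ℝ}

theorem PiPayoffExt_eq_integral_max (ht : t ≤ T) (hvt : vt t ≤ vt (t - 1))
    (hF : ∀ x ∈ Icc (vt t) (vt (t - 1)), HasDerivAt F (f x) x)
    (hf : ContinuousOn f (Icc (vt t) (vt (t - 1)))) (v : ℝ) :
    PiPayoffExt δ N K T r F f vt t v =
      δ ^ (t - 1) *
        ((∫ x in vt t..vt (t - 1), max (v - x) 0 * (((N : ℝ) - 1) * F x ^ (N - 2) * f x))
          + (v - r t) * F (vt t) ^ (N - 1) - F (vt (t - 1)) ^ (N - 1) * K) := by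
  rw [PiPayoffExt, if_pos ht, ← integral_sub_mul_eq_integral_max_sub_mul hvt
    (intervalIntegrable_const_mul_pow_mul hvt hF hf _ _)]
  simp only [mul_assoc]

theorem PiPayoffExt_sub_mem_Icc (hN : 1 ≤ N) (hδ : 0 ≤ δ) (ht : t ≤ T)
    (hvt : vt t ≤ vt (t - 1)) (hF : ∀ x ∈ Icc (vt t) (vt (t - 1)), HasDerivAt F (f x) x)
    (hf : ContinuousOn f (Icc (vt t) (vt (t - 1))))
    (hF0 : ∀ x ∈ Icc (vt t) (vt (t - 1)), 0 ≤ F x) (hf0 : ∀ x ∈ Icc (vt t) (vt (t - 1)), 0 ≤ f x)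
    {v₁ v₂ : ℝ} (hv : v₁ ≤ v₂) :
    PiPayoffExt δ N K T r F f vt t v₂ - PiPayoffExt δ N K T r F f vt t v₁ ∈
      Icc (δ ^ (t - 1) * ((v₂ - v₁) * F (vt t) ^ (N - 1)))
        (δ ^ (t - 1) * ((v₂ - v₁) * F (vt (t - 1)) ^ (N - 1))) := by
  have hint := intervalIntegrable_const_mul_pow_mul hvt hF hf ((N : ℝ) - 1) (N - 2)
  have hg0 : ∀ x ∈ Icc (vt t) (vt (t - 1)), 0 ≤ ((N : ℝ) - 1) * F x ^ (N - 2) * f x :=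
    fun x hx => mul_nonneg (mul_nonneg (by simp [hN]) (pow_nonneg (hF0 x hx) _)) (hf0 x hx)
  have hftc : ∫ x in vt t..vt (t - 1), ((N : ℝ) - 1) * F x ^ (N - 2) * f x
      = F (vt (t - 1)) ^ (N - 1) - F (vt t) ^ (N - 1) :=
    integral_eq_sub_of_hasDerivAt
      (fun x hx => (hF x (by rwa [uIcc_of_le hvt] at hx)).pow_sub_one hN) hint
  have hmono := integral_max_sub_mul_mono hvt hint hg0 hv
  have hle := integral_max_sub_mul_le hvt hint hg0 hv
  rw [hftc] at hle
  simp only [PiPayoffExt_eq_integral_max ht hvt hF hf, ← mul_sub]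
  constructor <;> exact mul_le_mul_of_nonneg_left (by linarith) (pow_nonneg hδ _)

end Payoff

theorem strictMono_PiPayoffExt_sub {vlo vhi δ K : ℝ} {N T t t' : ℕ} {r vt : ℕ → ℝ}
    {F f : ℝ → ℝ} (hlohi : vlo < vhi) (hN : 1 ≤ N) (hδ0 : 0 < δ) (hδ1 : δ < 1)
    (hFderiv : ∀ x ∈ Icc vlo vhi, HasDerivAt F (f x) x) (hfcont : ContinuousOn f (Icc vlo vhi))
    (hFmono : MonotoneOn F (Icc vlo vhi)) (hv0 : vt 0 = vhi)
    (hvmono : ∀ t, 1 ≤ t → t ≤ T → vt t ≤ vt (t - 1)) (hvT : vlo ≤ vt T)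
    (ht : 1 ≤ t) (htt' : t < t') (ht' : t' ≤ T + 1)
    (hcase : (t' ≤ T ∧ 0 < F (vt t')) ∨ (t = T ∧ t' = T + 1 ∧ 0 < F (vt T))) :
    StrictMono fun v => PiPayoffExt δ N K T r F f vt t v - PiPayoffExt δ N K T r F f vt t' v := by
  have hanti : ∀ {i j}, i ≤ j → j ≤ T → vt j ≤ vt i := fun hij hj =>
    AntitoneOn.Iic_of_le_pred hvmono (mem_Iic.2 (hij.trans hj)) (mem_Iic.2 hj) hij
  have hmem : ∀ s ≤ T, vt s ∈ Icc vlo vhi := fun s hs =>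
    ⟨hvT.trans (hanti hs le_rfl), hv0 ▸ hanti (Nat.zero_le s) hs⟩
  have hsub : ∀ s, 1 ≤ s → s ≤ T → Icc (vt s) (vt (s - 1)) ⊆ Icc vlo vhi := fun s _ hs =>
    Icc_subset_Icc (hmem s hs).1 (hmem (s - 1) (by omega)).2
  have hslopes : ∀ s, 1 ≤ s → s ≤ T → 0 < F (vt s) → ∀ ⦃v₁ v₂⦄, v₁ ≤ v₂ →
      PiPayoffExt δ N K T r F f vt s v₂ - PiPayoffExt δ N K T r F f vt s v₁ ∈
        Icc (δ ^ (s - 1) * ((v₂ - v₁) * F (vt s) ^ (N - 1)))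
          (δ ^ (s - 1) * ((v₂ - v₁) * F (vt (s - 1)) ^ (N - 1))) := fun s hs1 hsT hFs _ _ hv =>
    PiPayoffExt_sub_mem_Icc hN hδ0.le hsT (hvmono s hs1 hsT)
      (fun x hx => hFderiv x (hsub s hs1 hsT hx)) (hfcont.mono (hsub s hs1 hsT))
      (fun x hx => hFs.le.trans (hFmono (hmem s hsT) (hsub s hs1 hsT hx) hx.1))
      (fun x hx => (hFderiv x (hsub s hs1 hsT hx)).nonneg_of_monotoneOn_Icc hlohi
        (hsub s hs1 hsT hx) hFmono) hv
  have hFt : 0 < F (vt t) := by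
    rcases hcase with ⟨ht'T, hFt'⟩ | ⟨rfl, -, hFT⟩
    · exact hFt'.trans_le (hFmono (hmem t' ht'T) (hmem t (by omega)) (hanti htt'.le ht'T))
    · exact hFT
  intro v₁ v₂ hv
  have hlow := (hslopes t ht (by omega) hFt hv.le).1
  have hgap : 0 < (v₂ - v₁) * F (vt t) ^ (N - 1) := mul_pos (by linarith) (pow_pos hFt _)
  rcases hcase with ⟨ht'T, hFt'⟩ | ⟨-, rfl, -⟩
  · have hup := (hslopes t' (by omega) ht'T hFt' hv.le).2
    have hFt'1 : 0 ≤ F (vt (t' - 1)) :=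
      hFt'.le.trans (hFmono (hmem t' ht'T) (hmem _ (by omega)) (hvmono t' (by omega) ht'T))
    have hdisc : δ ^ (t' - 1) * ((v₂ - v₁) * F (vt (t' - 1)) ^ (N - 1))
        < δ ^ (t - 1) * ((v₂ - v₁) * F (vt t) ^ (N - 1)) :=
      calc δ ^ (t' - 1) * ((v₂ - v₁) * F (vt (t' - 1)) ^ (N - 1))
          ≤ δ ^ (t' - 1) * ((v₂ - v₁) * F (vt t) ^ (N - 1)) := by
            gcongr
            exact hFmono (hmem _ (by omega)) (hmem t (by omega)) (hanti (by omega) (by omega))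
        _ < δ ^ (t - 1) * ((v₂ - v₁) * F (vt t) ^ (N - 1)) :=
            mul_lt_mul_of_pos_right (pow_lt_pow_right_of_lt_one₀ hδ0 hδ1 (by omega)) hgap
    linarith
  · have hzero : ∀ v, PiPayoffExt δ N K T r F f vt (T + 1) v = 0 := fun v => by simp [PiPayoffExt]
    simp only [hzero, sub_zero]
    linarith [mul_pos (pow_pos hδ0 (t - 1)) hgap]

theorem monotone_comparison_general
    (vlo vhi : ℝ) (hlohi : vlo < vhi)
    (N : ℕ) (hN : 2 ≤ N)
    (K : ℝ)
    (δ : ℝ) (hδ0 : 0 < δ) (hδ1 : δ < 1)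
    (T : ℕ)
    (r : ℕ → ℝ)
    (F f : ℝ → ℝ)
    (hFderiv : ∀ x ∈ Set.Icc vlo vhi, HasDerivAt F (f x) x)
    (hfcont : ContinuousOn f (Set.Icc vlo vhi))
    (hFmono : MonotoneOn F (Set.Icc vlo vhi))
    (vt : ℕ → ℝ)
    (hv0 : vt 0 = vhi)
    (hvmono : ∀ t, 1 ≤ t → t ≤ T → vt t ≤ vt (t - 1))
    (hvT : vlo ≤ vt T)
    (t t' : ℕ) (ht : 1 ≤ t) (htt' : t < t') (ht' : t' ≤ T + 1)
    (hcase : (t' ≤ T ∧ 0 < F (vt t')) ∨ (t = T ∧ t' = T + 1 ∧ 0 < F (vt T))) :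
    (PiPayoffExt δ N K T r F f vt t' (vt t) ≤ PiPayoffExt δ N K T r F f vt t (vt t) →
      ∀ v, vt t < v → v ≤ vhi →
        PiPayoffExt δ N K T r F f vt t' v < PiPayoffExt δ N K T r F f vt t v) ∧
    (PiPayoffExt δ N K T r F f vt t (vt t) ≤ PiPayoffExt δ N K T r F f vt t' (vt t) →
      ∀ v, vlo ≤ v → v < vt t →
        PiPayoffExt δ N K T r F f vt t v < PiPayoffExt δ N K T r F f vt t' v) := by
  have hmono := strictMono_PiPayoffExt_sub (N := N) (K := K) (r := r) hlohi (by omega) hδ0 hδ1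
    hFderiv hfcont hFmono hv0 hvmono hvT ht htt' ht' hcase
  exact ⟨fun _ v hv _ => by linarith [hmono hv], fun _ v _ hv => by linarith [hmono hv]⟩

/-- Monotone comparison corollary: for `1 ≤ t < t' ≤ T + 1` (where either `t' ≤ T` and
`F(v_{t'}) > 0`, or `t = T`, `t' = T + 1` and `F(v_T) > 0`):
(i) if `Π_t(v_t) ≥ Π_{t'}(v_t)` then `Π_t(v) > Π_{t'}(v)` for every `v ∈ (v_t, vhi]`;
(ii) if `Π_t(v_t) ≤ Π_{t'}(v_t)` then `Π_t(v) < Π_{t'}(v)` for every `v ∈ [vlo, v_t)`. -/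
theorem monotone_comparison
    (vlo vhi : ℝ) (hlohi : vlo < vhi)
    (N : ℕ) (hN : 2 ≤ N)
    (K : ℝ) (hK : 0 < K)
    (δ : ℝ) (hδ0 : 0 < δ) (hδ1 : δ < 1)
    (T : ℕ) (hT : 1 ≤ T)
    (r : ℕ → ℝ)
    (F f : ℝ → ℝ)
    (hFderiv : ∀ x ∈ Set.Icc vlo vhi, HasDerivAt F (f x) x)
    (hfcont : ContinuousOn f (Set.Icc vlo vhi))
    (hFmono : MonotoneOn F (Set.Icc vlo vhi))
    (vt : ℕ → ℝ)
    (hv0 : vt 0 = vhi)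
    (hvmono : ∀ t, 1 ≤ t → t ≤ T → vt t ≤ vt (t - 1))
    (hvT : vlo ≤ vt T)
    (t t' : ℕ) (ht : 1 ≤ t) (htt' : t < t') (ht' : t' ≤ T + 1)
    (hcase : (t' ≤ T ∧ 0 < F (vt t')) ∨ (t = T ∧ t' = T + 1 ∧ 0 < F (vt T))) :
    (PiPayoffExt δ N K T r F f vt t' (vt t) ≤ PiPayoffExt δ N K T r F f vt t (vt t) →
      ∀ v, vt t < v → v ≤ vhi →
        PiPayoffExt δ N K T r F f vt t' v < PiPayoffExt δ N K T r F f vt t v) ∧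
    (PiPayoffExt δ N K T r F f vt t (vt t) ≤ PiPayoffExt δ N K T r F f vt t' (vt t) →
      ∀ v, vlo ≤ v → v < vt t →
        PiPayoffExt δ N K T r F f vt t v < PiPayoffExt δ N K T r F f vt t' v) :=
  monotone_comparison_general vlo vhi hlohi N hN K δ hδ0 hδ1 T r F f hFderiv hfcont hFmono vt hv0
    hvmono hvT t t' ht htt' ht' hcase
end
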